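/- arXiv:1506.07431 — 2 statements merged into one kernel-verified Lean document; each statement's English description precedes it below -/
import Mathlib

section
/- Let 𝒥 : E → E* be a bounded linear map that is symmetric, i.e. (𝒥x)(y) = (𝒥y)(x) for all x, y ∈ E. For every s ≤ 0 and t ∈ [0,1], the subspace β(s,t) = {(x, t·φ + s·𝒥x, t·x, φ) : x ∈ E, φ ∈ E*} is a Lagrangian subspace of (ℋ⊞, ω⊞): ω⊞ vanishes identically on β(s,t) × β(s,t), and every z ∈ ℋ⊞ satisfying ω⊞(z, w) = 0 for all w ∈ β(s,t) belongs to β(s,t). -/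
noncomputable section

/-- The symplectic form `ω` on `ℋ = E × E*`, `ω((x,φ),(y,ψ)) = ψ(x) − φ(y)`. -/
def omegaH {E : Type*} [NormedAddCommGroup E] [InnerProductSpace ℝ E]
    (p q : E × StrongDual ℝ E) : ℝ := q.2 p.1 - p.2 q.1

/-- The symplectic form `ω⊞ = ω ⊕ (−ω)` on the doubled space `ℋ⊞ = ℋ × ℋ`. -/
def omegaBp {E : Type*} [NormedAddCommGroup E] [InnerProductSpace ℝ E]
    (z w : (E × StrongDual ℝ E) × (E × StrongDual ℝ E)) : ℝ :=
  omegaH z.1 w.1 - omegaH z.2 w.2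

/-- The two-parameter family of subspaces `β(s,t) = {(x, t·φ + s·𝒥x, t·x, φ)}` of `ℋ⊞`. -/
def betaSet {E : Type*} [NormedAddCommGroup E] [InnerProductSpace ℝ E]
    (J : E →L[ℝ] StrongDual ℝ E) (s t : ℝ) :
    Set ((E × StrongDual ℝ E) × (E × StrongDual ℝ E)) :=
  {z | ∃ (x : E) (φ : StrongDual ℝ E), z = ((x, t • φ + s • J x), (t • x, φ))}

/-!
By the symmetry of `𝒥`, pairing `z = ((a, α), (b, β))` with the element `(x, t φ + s 𝒥 x, t x, φ)`
of `β(s,t)` gives `φ (t a - b) + (s 𝒥 a + t β - α) x`. For `z ∈ β(s,t)` both brackets vanish,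
which is isotropy. Conversely, if the pairing vanishes for all `x` and `φ`, then `b = t a` since
the dual separates points, and `α = t β + s 𝒥 a`, so `z ∈ β(s,t)`.
-/

section

variable {E : Type*} [NormedAddCommGroup E] [InnerProductSpace ℝ E]
  {J : E →L[ℝ] StrongDual ℝ E}

lemma omegaBp_betaSet_generator (hJ : ∀ x y : E, J x y = J y x) (s t : ℝ)
    (z : (E × StrongDual ℝ E) × (E × StrongDual ℝ E)) (x : E) (φ : StrongDual ℝ E) :
    omegaBp z ((x, t • φ + s • J x), (t • x, φ)) =
      φ (t • z.1.1 - z.2.1) + (s • J z.1.1 + t • z.2.2 - z.1.2) x := by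
  simp only [omegaBp, omegaH, add_apply, sub_apply, smul_apply, map_sub, map_smul, smul_eq_mul,
    hJ x z.1.1]
  ring

lemma betaSet_isotropic (hJ : ∀ x y : E, J x y = J y x) (s t : ℝ) :
    ∀ z ∈ betaSet J s t, ∀ w ∈ betaSet J s t, omegaBp z w = 0 := by
  rintro z ⟨y, ψ, rfl⟩ w ⟨x, φ, rfl⟩
  rw [omegaBp_betaSet_generator hJ]
  simp [add_comm]

lemma mem_betaSet_of_forall_omegaBp_eq_zero (hJ : ∀ x y : E, J x y = J y x) (s t : ℝ)
    (z : (E × StrongDual ℝ E) × (E × StrongDual ℝ E))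
    (hz : ∀ w ∈ betaSet J s t, omegaBp z w = 0) : z ∈ betaSet J s t := by
  obtain ⟨⟨a, α⟩, ⟨b, β⟩⟩ := z
  have hgen : ∀ (x : E) (φ : StrongDual ℝ E), φ (t • a - b) + (s • J a + t • β - α) x = 0 :=
    fun x φ ↦ omegaBp_betaSet_generator hJ s t ((a, α), (b, β)) x φ ▸ hz _ ⟨x, φ, rfl⟩
  have hb : t • a - b = 0 :=
    SeparatingDual.eq_zero_of_forall_dual_eq_zero (R := ℝ) fun φ ↦ by simpa using hgen 0 φ
  have hα : s • J a + t • β - α = 0 := by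
    ext x
    simpa using hgen x 0
  refine ⟨a, β, ?_⟩
  rw [sub_eq_zero.mp hb, ← sub_eq_zero.mp hα, add_comm]

end

theorem stmt5_general {E : Type*} [NormedAddCommGroup E] [InnerProductSpace ℝ E]
    (J : E →L[ℝ] StrongDual ℝ E) (hJ : ∀ x y : E, J x y = J y x) :
    ∀ s ≤ (0 : ℝ), ∀ t ∈ Set.Icc (0 : ℝ) 1,
      (∀ z ∈ betaSet J s t, ∀ w ∈ betaSet J s t, omegaBp z w = 0) ∧
      (∀ z : (E × StrongDual ℝ E) × (E × StrongDual ℝ E),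
        (∀ w ∈ betaSet J s t, omegaBp z w = 0) → z ∈ betaSet J s t) :=
  fun s _ t _ ↦
    ⟨betaSet_isotropic hJ s t, mem_betaSet_of_forall_omegaBp_eq_zero hJ s t⟩

/-- For a bounded symmetric `𝒥 : E → E*`, every `s ≤ 0` and every `t ∈ [0,1]`, the subspace
`β(s,t) = {(x, t·φ + s·𝒥x, t·x, φ)}` is Lagrangian in `(ℋ⊞, ω⊞)`. -/
theorem stmt5 {E : Type*} [NormedAddCommGroup E] [InnerProductSpace ℝ E] [CompleteSpace E]
    (J : E →L[ℝ] StrongDual ℝ E) (hJ : ∀ x y : E, J x y = J y x) :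
    ∀ s ≤ (0 : ℝ), ∀ t ∈ Set.Icc (0 : ℝ) 1,
      (∀ z ∈ betaSet J s t, ∀ w ∈ betaSet J s t, omegaBp z w = 0) ∧
      (∀ z : (E × StrongDual ℝ E) × (E × StrongDual ℝ E),
        (∀ w ∈ betaSet J s t, omegaBp z w = 0) → z ∈ betaSet J s t) :=
  stmt5_general J hJ
end
end

section
/- Equip the dual E* of a real Hilbert space E with the inner product transported from E by the Riesz isometry, and give ℋ⊞ = E × E* × E × E* the product Hilbert structure. Let 𝒥 : E → E* be a bounded symmetric linear map ((𝒥x)(y) = (𝒥y)(x) for all x, y) and 𝒥† : E* → E its Hilbert-space adjoint. Then for every s ≤ 0 and t ∈ [0,1], the orthogonal complement of β(s,t) = {(x, t·φ + s·𝒥x, t·x, φ) : x ∈ E, φ ∈ E*} in ℋ⊞ equals {(−t·y − s·𝒥†ψ, ψ, y, −t·ψ) : y ∈ E, ψ ∈ E*}. -/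
open RealInnerProductSpace

noncomputable section

/-- The inner product on `E*` transported from `E` by the Riesz isometry. -/
def dualInner {E : Type*} [NormedAddCommGroup E] [InnerProductSpace ℝ E] [CompleteSpace E]
    (φ ψ : StrongDual ℝ E) : ℝ :=
  ⟪(InnerProductSpace.toDual ℝ E).symm φ, (InnerProductSpace.toDual ℝ E).symm ψ⟫

/-- The product Hilbert inner product on `ℋ⊞ = E × E* × E × E*`, with `E*` carrying the
inner product transported from `E` by the Riesz isometry. -/
def boxInner {E : Type*} [NormedAddCommGroup E] [InnerProductSpace ℝ E] [CompleteSpace E]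
    (z w : (E × StrongDual ℝ E) × (E × StrongDual ℝ E)) : ℝ :=
  ⟪z.1.1, w.1.1⟫ + dualInner z.1.2 w.1.2 + ⟪z.2.1, w.2.1⟫ + dualInner z.2.2 w.2.2

/-! Pairing `z = (a, φ', b, ψ')` with the generator of `β(s,t)` indexed by `(x, φ)` gives
`⟪a + t•b + s•𝒥†φ', x⟫ + ⟪t•φ' + ψ', φ⟫_{E*}`. Since `x` and `φ` vary independently, `z ⊥ β(s,t)`
exactly when `a = -t•b - s•𝒥†φ'` and `ψ' = -t•φ'`, which is the stated parametrisation with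
`(y, ψ) = (b, φ')`. -/

section

variable {E : Type*} [NormedAddCommGroup E] [InnerProductSpace ℝ E] [CompleteSpace E]

theorem dualInner_self_eq_zero {φ : StrongDual ℝ E} (h : dualInner φ φ = 0) : φ = 0 := by
  rw [dualInner, inner_self_eq_zero] at h
  simpa using h

theorem forall_inner_add_dualInner_eq_zero_iff (u : E) (v : StrongDual ℝ E) :
    (∀ (x : E) (φ : StrongDual ℝ E), ⟪u, x⟫ + dualInner v φ = 0) ↔ u = 0 ∧ v = 0 := by
  refine ⟨fun h => ⟨?_, ?_⟩, ?_⟩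
  · simpa [dualInner] using h u 0
  · exact dualInner_self_eq_zero (by simpa using h 0 v)
  · rintro ⟨rfl, rfl⟩ x φ
    simp [dualInner]

variable (J : E →L[ℝ] StrongDual ℝ E) (Jd : StrongDual ℝ E →L[ℝ] E)

theorem boxInner_betaSet_generator
    (hJd : ∀ (x : E) (ψ : StrongDual ℝ E), dualInner (J x) ψ = ⟪x, Jd ψ⟫)
    (s t : ℝ) (a b x : E) (φ' ψ' φ : StrongDual ℝ E) :
    boxInner ((a, φ'), (b, ψ')) ((x, t • φ + s • J x), (t • x, φ))
      = ⟪a + t • b + s • Jd φ', x⟫ + dualInner (t • φ' + ψ') φ := by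
  have hJx : ⟪(InnerProductSpace.toDual ℝ E).symm φ', (InnerProductSpace.toDual ℝ E).symm (J x)⟫
      = ⟪Jd φ', x⟫ :=
    (real_inner_comm _ _).trans ((hJd x φ').trans (real_inner_comm _ _))
  simp only [boxInner, dualInner, map_add, map_smul, inner_add_left, inner_add_right,
    real_inner_smul_left, real_inner_smul_right, hJx]
  ring

theorem forall_mem_betaSet_boxInner_eq_zero_iff
    (hJd : ∀ (x : E) (ψ : StrongDual ℝ E), dualInner (J x) ψ = ⟪x, Jd ψ⟫)
    (s t : ℝ) (a b : E) (φ' ψ' : StrongDual ℝ E) :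
    (∀ w ∈ betaSet J s t, boxInner ((a, φ'), (b, ψ')) w = 0) ↔
      a + t • b + s • Jd φ' = 0 ∧ t • φ' + ψ' = 0 := by
  simp only [betaSet, Set.mem_ofPred_eq, forall_exists_index]
  rw [forall_comm]
  simp only [forall_comm (α := (E × StrongDual ℝ E) × E × StrongDual ℝ E), forall_eq,
    boxInner_betaSet_generator J Jd hJd]
  exact forall_inner_add_dualInner_eq_zero_iff _ _

end

theorem stmt6_general {E : Type*} [NormedAddCommGroup E] [InnerProductSpace ℝ E] [CompleteSpace E]
    (J : E →L[ℝ] StrongDual ℝ E)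
    (Jd : StrongDual ℝ E →L[ℝ] E)
    (hJd : ∀ (x : E) (ψ : StrongDual ℝ E), dualInner (J x) ψ = ⟪x, Jd ψ⟫) :
    ∀ s ≤ (0 : ℝ), ∀ t ∈ Set.Icc (0 : ℝ) 1,
      {z : (E × StrongDual ℝ E) × (E × StrongDual ℝ E) |
          ∀ w ∈ betaSet J s t, boxInner z w = 0}
        = {z | ∃ (y : E) (ψ : StrongDual ℝ E),
            z = ((-(t • y) - s • Jd ψ, ψ), (y, -(t • ψ)))} := by
  intro s _ t _
  ext ⟨⟨a, φ'⟩, b, ψ'⟩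
  rw [Set.mem_ofPred_eq, forall_mem_betaSet_boxInner_eq_zero_iff J Jd hJd]
  constructor
  · rintro ⟨ha, hψ⟩
    have ha' : a = -(t • b) - s • Jd φ' := by linear_combination (norm := module) ha
    exact ⟨b, φ', by rw [ha', eq_neg_of_add_eq_zero_right hψ]⟩
  · rintro ⟨y, ψ, ⟨⟩⟩
    constructor <;> abel

/-- For a bounded symmetric `𝒥 : E → E*` with Hilbert-space adjoint `𝒥† : E* → E`
(with respect to the transported inner product on `E*`), and every `s ≤ 0`, `t ∈ [0,1]`,
the orthogonal complement of `β(s,t)` in `ℋ⊞` is `{(−t·y − s·𝒥†ψ, ψ, y, −t·ψ)}`. -/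
theorem stmt6 {E : Type*} [NormedAddCommGroup E] [InnerProductSpace ℝ E] [CompleteSpace E]
    (J : E →L[ℝ] StrongDual ℝ E) (hJ : ∀ x y : E, J x y = J y x)
    (Jd : StrongDual ℝ E →L[ℝ] E)
    (hJd : ∀ (x : E) (ψ : StrongDual ℝ E), dualInner (J x) ψ = ⟪x, Jd ψ⟫) :
    ∀ s ≤ (0 : ℝ), ∀ t ∈ Set.Icc (0 : ℝ) 1,
      {z : (E × StrongDual ℝ E) × (E × StrongDual ℝ E) |
          ∀ w ∈ betaSet J s t, boxInner z w = 0}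
        = {z | ∃ (y : E) (ψ : StrongDual ℝ E),
            z = ((-(t • y) - s • Jd ψ, ψ), (y, -(t • ψ)))} :=
  stmt6_general J Jd hJd
end
end
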